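/- arXiv:math/0304377 — 6 statements merged into one kernel-verified Lean document; each statement's English description precedes it below -/
import Mathlib

section
/- (von Staudt–Clausen) For every positive integer $n$, the rational number $B_{2n} + \sum_{p-1 \mid 2n} \frac{1}{p}$ is an integer, where the sum is over primes $p$ with $p-1$ dividing $2n$. -/
theorem von_staudt_clausen_general (n : ℕ) :
    ∃ z : ℤ,
      bernoulli (2 * n) +
        ∑ p ∈ (Finset.range (2 * n + 2)).filter (fun p => p.Prime ∧ (p - 1) ∣ 2 * n),
          (1 : ℚ) / p = z := by
  obtain ⟨z, hz⟩ := Bernoulli.vonStaudt_clausen n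
  exact ⟨z, hz.symm⟩

/-- von Staudt–Clausen: for every positive integer `n`, the rational number
`B_{2n} + ∑_{p prime, p-1 ∣ 2n} 1/p` is an integer. -/
theorem von_staudt_clausen (n : ℕ) (hn : 0 < n) :
    ∃ z : ℤ,
      bernoulli (2 * n) +
        ∑ p ∈ (Finset.range (2 * n + 2)).filter (fun p => p.Prime ∧ (p - 1) ∣ 2 * n),
          (1 : ℚ) / p = z :=
  von_staudt_clausen_general n
end

section
/- (Kummer's congruence) Let $p$ be an odd prime and $m, n$ positive even integers with $m \equiv n \pmod{p-1}$ and $p-1 \nmid m$. Then $(1-p^{m-1})\frac{B_m}{m} \equiv (1-p^{n-1})\frac{B_n}{n} \pmod{p}$, as elements of $\mathbb{Z}_{(p)}$. -/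
/-- `q` is `p`-integral, i.e. lies in the localization `ℤ_(p)`. -/
def PIntegral (p : ℕ) (q : ℚ) : Prop := ¬ (p ∣ q.den)

/-!
Fix `N = p ^ K` and `a` prime to `p`, and write `j * a = N * q_j + r_j` for `j < N`. Expanding
`(j * a) ^ s = (r_j + N * q_j) ^ s` modulo `N²` and summing over `j < N` (the `r_j` permute
`0, …, N - 1`) gives Voronoi's congruence
`(a^s - 1) ∑_{j<N} j^s ≡ s N ∑_{j<N} r_j^(s-1) q_j (mod N²)`.
By Faulhaber's formula `∑_{j<N} j^s` agrees with `N B_s` up to a multiple of `N² / p²`, because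
every `p B_i` is `p`-integral (which follows from the same estimate with `K = 1`, by induction on
`i`). Dividing by `s N` shows, for `K` large, that `(a^s - 1) B_s / s` is a `p`-adic integer
congruent mod `p` to `∑_j r_j^(s-1) q_j`. By Fermat, for `s ≥ 2` this sum mod `p` only depends on
`s` modulo `p - 1`; as `p - 1 ∤ m` we may pick `a` with `a^m ≢ 1 (mod p)`, whence
`B_m / m ≡ B_n / n (mod p)`, and the Euler factors `1 - p^(s-1)` are `≡ 1`.
-/

open Finset IsUltrametricDist

theorem ZMod.pow_eq_pow_of_modEq_sub_one {p : ℕ} [Fact p.Prime] (x : ZMod p) {s t : ℕ}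
    (hs : s ≠ 0) (ht : t ≠ 0) (h : s ≡ t [MOD p - 1]) : x ^ s = x ^ t := by
  rcases eq_or_ne x 0 with rfl | hx
  · rw [zero_pow hs, zero_pow ht]
  rw [← Nat.mod_add_div s (p - 1), ← Nat.mod_add_div t (p - 1), pow_add, pow_add, pow_mul,
    pow_mul, ZMod.pow_card_sub_one_eq_one hx, one_pow, one_pow, h]

theorem ZMod.exists_unit_pow_ne_one {p : ℕ} [Fact p.Prime] {m : ℕ} (h : ¬(p - 1) ∣ m) :
    ∃ u : (ZMod p)ˣ, u ^ m ≠ 1 := by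
  by_contra! hall
  rw [← ZMod.card_units p, ← Nat.card_eq_fintype_card, ← IsCyclic.exponent_eq_card] at h
  exact h (Monoid.exponent_dvd_of_forall_pow_eq_one hall)

theorem sum_range_comp_mul_mod {M : Type*} [AddCommMonoid M] {a N : ℕ} (h : a.Coprime N)
    (f : ℕ → M) : ∑ j ∈ range N, f (j * a % N) = ∑ j ∈ range N, f j := by
  have hinj : Set.InjOn (fun j => j * a % N) (range N) := fun j hj k hk hjk =>
    (Nat.ModEq.cancel_right_of_coprime (Nat.coprime_comm.1 h) hjk).eq_of_lt_of_lt
      (mem_range.1 hj) (mem_range.1 hk)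
  have himage : (range N).image (fun j => j * a % N) = range N := by
    refine eq_of_subset_of_card_le (fun x hx => ?_) (card_image_of_injOn hinj).ge
    obtain ⟨j, hj, rfl⟩ := mem_image.1 hx
    exact mem_range.2 (Nat.mod_lt _ (Nat.zero_lt_of_lt (mem_range.1 hj)))
  rw [← sum_image hinj, himage]

theorem Padic.norm_natCast_inv_le {p : ℕ} [Fact p.Prime] (j : ℕ) :
    ‖(j : ℚ_[p])⁻¹‖ ≤ (p : ℝ) ^ ((j : ℤ) - 1) := by
  rcases eq_or_ne j 0 with rfl | hj
  · simp only [Nat.cast_zero, inv_zero, norm_zero]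
    positivity
  rw [norm_inv, norm_eq_zpow_neg_valuation (Nat.cast_ne_zero.2 hj), valuation_natCast, ← zpow_neg,
    neg_neg]
  have hv := (padicValNat_le_nat_log (p := p) j).trans_lt (Nat.log_lt_self p hj)
  exact zpow_le_zpow_right₀ (mod_cast (Fact.out : p.Prime).one_le) (by omega)

theorem PadicInt.exists_toZMod_mul_eq {p : ℕ} [Fact p.Prime] {u v : ℤ_[p]} (hu : toZMod u ≠ 0)
    {x : ℚ_[p]} (h : ‖(u : ℚ_[p]) * x - v‖ < 1) :
    ∃ y : ℤ_[p], (y : ℚ_[p]) = x ∧ toZMod u * toZMod y = toZMod v := by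
  have hu1 : ‖(u : ℚ_[p])‖ = 1 := by
    rw [← norm_def, ← isUnit_iff]
    by_contra hnu
    apply hu
    rw [← RingHom.mem_ker, ker_toZMod, IsLocalRing.mem_maximalIdeal]
    exact hnu
  have hx : ‖x‖ ≤ 1 := by
    have hux : ‖(u : ℚ_[p]) * x‖ ≤ 1 := by
      rw [← sub_add_cancel ((u : ℚ_[p]) * x) v]
      exact (norm_add_le_max _ _).trans (max_le h.le (PadicInt.norm_le_one v))
    rwa [norm_mul, hu1, one_mul] at hux
  let y : ℤ_[p] := ⟨x, hx⟩
  have hy : u * y - v ∈ RingHom.ker toZMod := by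
    rw [ker_toZMod, IsLocalRing.mem_maximalIdeal, mem_nonunits]
    exact h
  refine ⟨y, rfl, ?_⟩
  rwa [RingHom.mem_ker, map_sub, map_mul, sub_eq_zero] at hy

theorem pIntegral_iff_norm_le_one {p : ℕ} [Fact p.Prime] {q : ℚ} :
    PIntegral p q ↔ ‖(q : ℚ_[p])‖ ≤ 1 :=
  ((Padic.norm_rat_le_one_iff_padicValuation_le_one p).trans Rat.padicValuation_le_one_iff).symm

theorem natCast_mul_bernoulli_eq_sum_pow_sub (m N : ℕ) :
    (N : ℚ) * bernoulli m = ∑ k ∈ range N, (k : ℚ) ^ m -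
      ∑ i ∈ range m, m.choose i * bernoulli i * (N : ℚ) ^ (m + 1 - i) / (m + 1 - i : ℕ) := by
  have hterm : ∀ i ∈ range m,
      bernoulli i * (m + 1).choose i * (N : ℚ) ^ (m + 1 - i) / (m + 1) =
        m.choose i * bernoulli i * (N : ℚ) ^ (m + 1 - i) / (m + 1 - i : ℕ) := fun i hi => by
    have hchoose : (m.choose i : ℚ) * (m + 1) = (m + 1).choose i * (m + 1 - i : ℕ) := by
      exact_mod_cast Nat.choose_mul_succ_eq m i
    have hj : ((m + 1 - i : ℕ) : ℚ) ≠ 0 := by have := mem_range.1 hi; norm_cast; omega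
    rw [div_eq_div_iff (by positivity) hj]
    linear_combination (bernoulli i * (N : ℚ) ^ (m + 1 - i)) * hchoose.symm
  rw [sum_range_pow, sum_range_succ, sum_congr rfl hterm, Nat.choose_succ_self_right,
    Nat.add_sub_cancel_left, pow_one]
  push_cast
  field_simp
  ring

def voronoiSum (N a s : ℕ) : ℕ := ∑ j ∈ range N, (j * a % N) ^ (s - 1) * (j * a / N)

theorem voronoi_congruence {N a : ℕ} (h : a.Coprime N) (s : ℕ) :
    ((a : ℤ) ^ s - 1) * ∑ j ∈ range N, (j : ℤ) ^ s ≡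
      s * N * voronoiSum N a s [ZMOD N ^ 2] := by
  have hterm (j : ℕ) : ((j * a : ℕ) : ℤ) ^ s ≡ ((j * a % N : ℕ) : ℤ) ^ s +
      s * N * ((j * a % N) ^ (s - 1) * (j * a / N) : ℕ) [ZMOD N ^ 2] := by
    set r := j * a % N
    set q := j * a / N
    have hdiv : ((j * a : ℕ) : ℤ) = r + N * q := mod_cast (Nat.mod_add_div (j * a) N).symm
    refine (Int.modEq_iff_dvd.2 ?_).symm
    rw [hdiv]
    refine ((pow_dvd_pow_of_dvd (dvd_mul_right (N : ℤ) q) 2).trans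
      (sq_dvd_add_pow_sub_sub ((N : ℤ) * q) (r : ℤ) s)).trans (dvd_of_eq ?_)
    push_cast
    ring
  have key : (a : ℤ) ^ s * ∑ j ∈ range N, (j : ℤ) ^ s ≡
      ∑ j ∈ range N, (j : ℤ) ^ s + s * N * voronoiSum N a s [ZMOD N ^ 2] := by
    have hsum := Int.ModEq.sum (s := range N) fun j _ => hterm j
    rw [sum_add_distrib, sum_range_comp_mul_mod h (fun k => (k : ℤ) ^ s), ← mul_sum] at hsum
    simpa [voronoiSum, mul_sum, mul_pow, mul_comm] using hsum
  simpa [sub_mul] using key.sub_right (∑ j ∈ range N, (j : ℤ) ^ s)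

theorem voronoiSum_cast_eq_of_modEq {p N a s t : ℕ} [Fact p.Prime] (hs : 2 ≤ s) (ht : 2 ≤ t)
    (h : s ≡ t [MOD p - 1]) : (voronoiSum N a s : ZMod p) = voronoiSum N a t := by
  have h' : s - 1 ≡ t - 1 [MOD p - 1] := Nat.ModEq.add_right_cancel' 1 <| by
    rwa [Nat.sub_add_cancel (by omega), Nat.sub_add_cancel (by omega)]
  simp only [voronoiSum, Nat.cast_sum, Nat.cast_mul, Nat.cast_pow]
  exact sum_congr rfl fun j _ => by
    rw [ZMod.pow_eq_pow_of_modEq_sub_one _ (by omega) (by omega) h']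

section
variable {p : ℕ} [Fact p.Prime]
open Padic

theorem norm_faulhaber_term_le {b : ℚ_[p]} (hb : ‖b‖ ≤ p) (c : ℕ) {K j : ℕ} (hK : 1 ≤ K)
    (hj : 2 ≤ j) :
    ‖(c * b * ((p : ℚ_[p]) ^ K) ^ j / j)‖ ≤ (p : ℝ) ^ (2 - 2 * K : ℤ) := by
  have hp : (1 : ℝ) ≤ p := mod_cast (Fact.out : p.Prime).one_le
  calc ‖(c * b * ((p : ℚ_[p]) ^ K) ^ j / j)‖
      = ‖(c : ℚ_[p])‖ * ‖b‖ * (p : ℝ) ^ (-(K * j : ℕ) : ℤ) * ‖(j : ℚ_[p])⁻¹‖ := by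
        rw [div_eq_mul_inv, norm_mul, norm_mul, norm_mul, ← pow_mul, norm_p_pow]
    _ ≤ 1 * (p : ℝ) ^ (1 : ℤ) * (p : ℝ) ^ (-(K * j : ℕ) : ℤ) * (p : ℝ) ^ ((j : ℤ) - 1) := by
        gcongr
        · exact norm_natCast_le_one _ _
        · rwa [zpow_one]
        · exact norm_natCast_inv_le j
    _ = (p : ℝ) ^ ((j : ℤ) * (1 - K)) := by
        rw [one_mul, ← zpow_add₀ (by positivity), ← zpow_add₀ (by positivity)]
        push_cast
        ring_nf
    _ ≤ (p : ℝ) ^ (2 - 2 * K : ℤ) := by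
        apply zpow_le_zpow_right₀ hp
        have : (0 : ℤ) ≤ K - 1 := by omega
        nlinarith

theorem norm_pow_mul_bernoulli_sub_sum_pow_le {m K : ℕ} (hK : 1 ≤ K)
    (hB : ∀ i < m, ‖(bernoulli i : ℚ_[p])‖ ≤ p) :
    ‖(p : ℚ_[p]) ^ K * bernoulli m - ∑ k ∈ range (p ^ K), (k : ℚ_[p]) ^ m‖
      ≤ (p : ℝ) ^ (2 - 2 * K : ℤ) := by
  have h := congrArg (Rat.cast : ℚ → ℚ_[p]) (natCast_mul_bernoulli_eq_sum_pow_sub m (p ^ K))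
  push_cast at h
  rw [h, sub_sub_cancel_left, norm_neg]
  refine norm_sum_le_of_forall_le_of_nonneg (by positivity) fun i hi => ?_
  have hi := mem_range.1 hi
  exact norm_faulhaber_term_le (hB i hi) _ hK (by omega)

theorem norm_bernoulli_le (m : ℕ) : ‖(bernoulli m : ℚ_[p])‖ ≤ p := by
  induction m using Nat.strong_induction_on with
  | _ m ih =>
  have htail := norm_pow_mul_bernoulli_sub_sum_pow_le (p := p) le_rfl ih
  have hsum : ‖∑ k ∈ range (p ^ 1), (k : ℚ_[p]) ^ m‖ ≤ 1 :=
    norm_sum_le_of_forall_le_of_nonneg zero_le_one fun k _ => by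
      rw [norm_pow]; exact pow_le_one₀ (norm_nonneg _) (norm_natCast_le_one _ k)
  have : ‖(p : ℚ_[p]) ^ 1 * bernoulli m‖ ≤ 1 := by
    rw [← sub_add_cancel ((p : ℚ_[p]) ^ 1 * bernoulli m)]
    refine (norm_add_le_max _ _).trans (max_le ?_ hsum)
    simpa using htail
  rwa [pow_one, norm_mul, norm_p, inv_mul_le_iff₀ (mod_cast (Fact.out : p.Prime).pos),
    mul_one] at this

theorem norm_pow_mul_bernoulli_sub_voronoiSum_le {a s K : ℕ} (ha : a.Coprime p)
    (hK : 1 ≤ K) :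
    ‖((a : ℚ_[p]) ^ s - 1) * ((p : ℚ_[p]) ^ K * bernoulli s) -
      s * (p : ℚ_[p]) ^ K * voronoiSum (p ^ K) a s‖ ≤ (p : ℝ) ^ (2 - 2 * K : ℤ) := by
  obtain ⟨z, hz⟩ := (voronoi_congruence (ha.pow_right K) s).dvd
  have hz' : (s : ℚ_[p]) * (p : ℚ_[p]) ^ K * voronoiSum (p ^ K) a s =
      ((a : ℚ_[p]) ^ s - 1) * ∑ j ∈ range (p ^ K), (j : ℚ_[p]) ^ s +
        (p : ℚ_[p]) ^ (2 * K) * z := by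
    have := congrArg (Int.cast : ℤ → ℚ_[p]) hz
    push_cast at this
    rw [pow_mul', ← this]
    ring
  have htail := norm_pow_mul_bernoulli_sub_sum_pow_le (p := p) (m := s) hK
    fun i _ => norm_bernoulli_le i
  rw [hz', ← sub_sub, ← mul_sub, sub_eq_add_neg]
  refine (norm_add_le_max _ _).trans (max_le ?_ ?_)
  · rw [norm_mul]
    refine (mul_le_of_le_one_left (norm_nonneg _) ?_).trans htail
    exact_mod_cast norm_intCast_le_one ℚ_[p] ((a : ℤ) ^ s - 1)
  · rw [norm_neg, norm_mul, norm_p_pow]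
    calc _ ≤ (p : ℝ) ^ (-(2 * K : ℕ) : ℤ) * 1 := by gcongr; exact norm_intCast_le_one ℚ_[p] z
      _ ≤ _ := by
        rw [mul_one]
        exact zpow_le_zpow_right₀ (mod_cast (Fact.out : p.Prime).one_le) (by omega)

theorem norm_bernoulli_div_sub_voronoiSum_lt_one {a s K : ℕ} (ha : a.Coprime p) (hs : s ≠ 0)
    (hK : s + 2 ≤ K) :
    ‖((a : ℚ_[p]) ^ s - 1) * bernoulli s / s - voronoiSum (p ^ K) a s‖ < 1 := by
  have hp : (1 : ℝ) < p := mod_cast (Fact.out : p.Prime).one_lt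
  have hpK : (p : ℚ_[p]) ^ K ≠ 0 := pow_ne_zero _ (mod_cast (Fact.out : p.Prime).ne_zero)
  have hs' : (s : ℚ_[p]) ≠ 0 := mod_cast hs
  have e : ((a : ℚ_[p]) ^ s - 1) * bernoulli s / s - voronoiSum (p ^ K) a s =
      (((a : ℚ_[p]) ^ s - 1) * ((p : ℚ_[p]) ^ K * bernoulli s) -
        s * (p : ℚ_[p]) ^ K * voronoiSum (p ^ K) a s) *
        ((p : ℚ_[p]) ^ K)⁻¹ * (s : ℚ_[p])⁻¹ := by
    field_simp
  rw [e, norm_mul, norm_mul, norm_inv, norm_p_pow]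
  calc _ ≤ (p : ℝ) ^ (2 - 2 * K : ℤ) * ((p : ℝ) ^ (-K : ℤ))⁻¹ * (p : ℝ) ^ ((s : ℤ) - 1) := by
        gcongr
        · exact norm_pow_mul_bernoulli_sub_voronoiSum_le ha (by omega)
        · exact norm_natCast_inv_le s
    _ = (p : ℝ) ^ (1 + s - K : ℤ) := by
        rw [← zpow_neg, ← zpow_add₀ (by positivity), ← zpow_add₀ (by positivity)]
        ring_nf
    _ < 1 := zpow_lt_one_of_neg₀ hp (by omega)

end

section
variable {p : ℕ} [Fact p.Prime]
open PadicInt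

theorem exists_bernoulli_div_toZMod_eq {a s K : ℕ} (ha : a.Coprime p) (hs : s ≠ 0)
    (hK : s + 2 ≤ K) (has : (a : ZMod p) ^ s ≠ 1) :
    ∃ β : ℤ_[p], (β : ℚ_[p]) = bernoulli s / s ∧
      ((a : ZMod p) ^ s - 1) * toZMod β = voronoiSum (p ^ K) a s := by
  have h := norm_bernoulli_div_sub_voronoiSum_lt_one ha hs hK
  rw [mul_div_assoc] at h
  obtain ⟨β, hβ, hred⟩ := exists_toZMod_mul_eq (u := (a : ℤ_[p]) ^ s - 1)
    (v := voronoiSum (p ^ K) a s) (by simpa [sub_eq_zero] using has) (by simpa using h)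
  refine ⟨β, hβ, ?_⟩
  rwa [map_sub, map_pow, map_natCast, map_one, map_natCast] at hred

theorem pIntegral_div_of_toZMod_eq_zero {q : ℚ} {x : ℤ_[p]} (hx : (x : ℚ_[p]) = q)
    (h : toZMod x = 0) : PIntegral p (q / p) := by
  have hdvd : (p : ℤ_[p]) ∣ x := by
    rw [← norm_lt_one_iff_dvd, ← mem_nonunits, ← IsLocalRing.mem_maximalIdeal, ← ker_toZMod]
    exact h
  obtain ⟨y, rfl⟩ := hdvd
  have hy : ((q / p : ℚ) : ℚ_[p]) = y := by
    have hp : (p : ℚ_[p]) ≠ 0 := mod_cast (Fact.out : p.Prime).ne_zero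
    push_cast [← hx]
    field_simp
  exact pIntegral_iff_norm_le_one.2 (hy ▸ y.norm_le_one)

end

theorem kummer_congruence_general (p : ℕ) (hp : p.Prime)
    (m n : ℕ) (hm : 0 < m) (hn : 0 < n) (hme : Even m) (hne : Even n)
    (hcong : m ≡ n [MOD p - 1]) (hnd : ¬ (p - 1) ∣ m) :
    PIntegral p
      (((1 - (p : ℚ) ^ (m - 1)) * bernoulli m / m
        - (1 - (p : ℚ) ^ (n - 1)) * bernoulli n / n) / p) := by
  have : Fact p.Prime := ⟨hp⟩
  have hm2 : 2 ≤ m := by obtain ⟨k, rfl⟩ := hme; omega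
  have hn2 : 2 ≤ n := by obtain ⟨k, rfl⟩ := hne; omega
  obtain ⟨u, hu⟩ := ZMod.exists_unit_pow_ne_one hnd
  set a := (u : ZMod p).val
  have ham : (a : ZMod p) ^ m ≠ 1 := by
    rwa [ZMod.natCast_zmod_val, ← Units.val_pow_eq_pow_val, Ne, Units.val_eq_one]
  have hpow : (a : ZMod p) ^ m = (a : ZMod p) ^ n :=
    ZMod.pow_eq_pow_of_modEq_sub_one _ (by omega) (by omega) hcong
  obtain ⟨βm, hβm, hVm⟩ := exists_bernoulli_div_toZMod_eq (K := m + n + 2)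
    (ZMod.val_coe_unit_coprime u) (by omega) (by omega) ham
  obtain ⟨βn, hβn, hVn⟩ := exists_bernoulli_div_toZMod_eq (K := m + n + 2)
    (ZMod.val_coe_unit_coprime u) (by omega) (by omega) (hpow ▸ ham)
  have hβ : PadicInt.toZMod βm = PadicInt.toZMod βn := by
    refine mul_left_cancel₀ (sub_ne_zero.2 ham) ?_
    rw [hVm, voronoiSum_cast_eq_of_modEq hm2 hn2 hcong, ← hVn, hpow]
  refine pIntegral_div_of_toZMod_eq_zero
    (x := (1 - (p : ℤ_[p]) ^ (m - 1)) * βm - (1 - (p : ℤ_[p]) ^ (n - 1)) * βn) ?_ ?_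
  · push_cast [hβm, hβn]
    ring
  · simp [hβ, zero_pow (show m - 1 ≠ 0 by omega), zero_pow (show n - 1 ≠ 0 by omega)]

/-- Kummer's congruence: for an odd prime `p` and positive even integers `m, n` with
`m ≡ n (mod p-1)` and `p-1 ∤ m`, one has
`(1-p^(m-1)) B_m/m ≡ (1-p^(n-1)) B_n/n (mod p)` in `ℤ_(p)`. -/
theorem kummer_congruence (p : ℕ) (hp : p.Prime) (hodd : Odd p)
    (m n : ℕ) (hm : 0 < m) (hn : 0 < n) (hme : Even m) (hne : Even n)
    (hcong : m ≡ n [MOD p - 1]) (hnd : ¬ (p - 1) ∣ m) :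
    PIntegral p
      (((1 - (p : ℚ) ^ (m - 1)) * bernoulli m / m
        - (1 - (p : ℚ) ^ (n - 1)) * bernoulli n / n) / p) :=
  kummer_congruence_general p hp m n hm hn hme hne hcong hnd
end

section
/- Let $x(u)$ be the formal Laurent series solution of $x'(u)^2 = 4x(u)^3 - 4$ of the form $x(u) = u^{-2} + \sum_{k\ge 1} c_k u^{k-2}$ with rational coefficients. Then $c_k = 0$ unless $6 \mid k$, i.e., $x(u) = u^{-2} + \sum_{n\ge 1} a_n u^{6n-2}$ for some rationals $a_n$. -/
/-!
With `x = P / u²` the equation `x'² = 4x³ - 4` becomes `(X P' - 2P)² = 4P³ - 4X⁶`.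
Write `P = ∑ pₖ Xᵏ` and suppose `pᵢ = 0` for all `i < n` with `6 ∤ i`, where `6 ∤ n`. In any
product of such series the coefficient of `Xⁿ` only sees the splittings `n = n + 0 = 0 + n`, so
it is linear in `pₙ`. Comparing coefficients of `Xⁿ` in `(X P' - 2P)² = 4P³ - 4X⁶` then gives
`-4(n - 2) pₙ = 12 pₙ`, i.e. `(4n + 4) pₙ = 0`, and strong induction on `n` concludes.
-/

open PowerSeries Finset

namespace PowerSeries

variable {R : Type*}

def VanishesOffMultiplesBelow [Semiring R] (m n : ℕ) (f : R⟦X⟧) : Prop :=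
  ∀ i < n, ¬ m ∣ i → coeff i f = 0

namespace VanishesOffMultiplesBelow

variable {m n : ℕ} {f g : R⟦X⟧}

theorem mono [Semiring R] {n' : ℕ} (hf : VanishesOffMultiplesBelow m n f) (h : n' ≤ n) :
    VanishesOffMultiplesBelow m n' f :=
  fun i hi hm => hf i (hi.trans_le h) hm

theorem coeff_mul [Semiring R] (hf : VanishesOffMultiplesBelow m n f)
    (hg : VanishesOffMultiplesBelow m n g) (hn : ¬ m ∣ n) :
    coeff n (f * g) = coeff n f * coeff 0 g + coeff 0 f * coeff n g := by
  have hn0 : n ≠ 0 := by rintro rfl; exact hn (dvd_zero m)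
  rw [PowerSeries.coeff_mul]
  refine sum_eq_add_of_mem (n, 0) (0, n) (by simp) (by simp) (by simp [hn0]) ?_
  rintro ⟨a, b⟩ hab ⟨hna, hnb⟩
  rw [HasAntidiagonal.mem_antidiagonal] at hab
  have ha : a < n := by grind
  have hb : b < n := by grind
  by_cases hma : m ∣ a
  · rw [hg b hb fun hmb => hn (hab ▸ dvd_add hma hmb), mul_zero]
  · rw [hf a ha hma, zero_mul]

theorem mul [Semiring R] (hf : VanishesOffMultiplesBelow m n f)
    (hg : VanishesOffMultiplesBelow m n g) : VanishesOffMultiplesBelow m n (f * g) := by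
  intro i hi hm
  rw [(hf.mono hi.le).coeff_mul (hg.mono hi.le) hm, hf i hi hm, hg i hi hm]
  simp

theorem pow [Semiring R] (hf : VanishesOffMultiplesBelow m n f) (k : ℕ) :
    VanishesOffMultiplesBelow m n (f ^ k) := by
  induction k with
  | zero =>
    intro i _ hm
    have hi0 : i ≠ 0 := by rintro rfl; exact hm (dvd_zero m)
    simp [coeff_one, hi0]
  | succ k ih => rw [pow_succ]; exact ih.mul hf

theorem coeff_pow_succ [CommSemiring R] (hf : VanishesOffMultiplesBelow m n f) (hn : ¬ m ∣ n)
    (k : ℕ) : coeff n (f ^ (k + 1)) = (k + 1) * coeff 0 f ^ k * coeff n f := by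
  induction k with
  | zero => simp
  | succ k ih =>
    rw [pow_succ, (hf.pow _).coeff_mul hf hn, ih]
    simp only [coeff_zero_eq_constantCoeff_apply, map_pow]
    push_cast
    ring

end VanishesOffMultiplesBelow

theorem coeff_X_mul_derivative_sub_two_mul [CommRing R] (f : R⟦X⟧) (i : ℕ) :
    coeff i (X * d⁄dX R f - 2 * f) = (i - 2) * coeff i f := by
  rw [map_sub, ← map_ofNat C 2, coeff_C_mul]
  cases i with
  | zero => simp
  | succ i => rw [coeff_succ_X_mul, coeff_derivative]; push_cast; ring

end PowerSeries

/-- Writing `x(u) = u⁻² + ∑_{k≥1} c_k u^(k-2)` as `x(u) = P(u)/u²` with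
`P ∈ ℚ⟦u⟧`, `P(0) = 1`, the equation `x'² = 4x³ - 4` becomes
`(u P' - 2P)² = 4P³ - 4u⁶`.  Then `c_k` (= coefficient of `u^k` in `P`)
vanishes unless `6 ∣ k`. -/
theorem coeff_vanish_unless_six_dvd (P : ℚ⟦X⟧)
    (h0 : constantCoeff P = 1)
    (hode : (X * d⁄dX ℚ P - 2 * P) ^ 2 = 4 * P ^ 3 - 4 * X ^ 6) :
    ∀ k : ℕ, ¬ (6 ∣ k) → coeff k P = 0 := by
  intro n
  induction n using Nat.strong_induction_on with
  | _ n ih =>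
    intro hn
    have hP : VanishesOffMultiplesBelow 6 n P := ih
    have hQ : VanishesOffMultiplesBelow 6 n (X * d⁄dX ℚ P - 2 * P) := fun i hi hi6 => by
      rw [coeff_X_mul_derivative_sub_two_mul, hP i hi hi6, mul_zero]
    have hn6 : n ≠ 6 := by rintro rfl; exact hn dvd_rfl
    have hlhs : coeff n ((X * d⁄dX ℚ P - 2 * P) ^ 2) = -4 * (n - 2) * coeff n P := by
      rw [hQ.coeff_pow_succ hn, coeff_X_mul_derivative_sub_two_mul,
        coeff_X_mul_derivative_sub_two_mul, coeff_zero_eq_constantCoeff_apply, h0]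
      ring
    have hrhs : coeff n (4 * P ^ 3 - 4 * X ^ 6 : ℚ⟦X⟧) = 12 * coeff n P := by
      rw [map_sub, ← map_ofNat C 4, coeff_C_mul, coeff_C_mul, hP.coeff_pow_succ hn, coeff_X_pow,
        if_neg hn6, coeff_zero_eq_constantCoeff_apply, h0]
      ring
    have : (4 * (n : ℚ) + 4) * coeff n P = 0 := by
      linear_combination hlhs - hrhs - congrArg (coeff n) hode
    exact (mul_eq_zero.mp this).resolve_left (by positivity)
end

section
/- There is a unique formal Laurent series $x(u) \in \mathbb{Q}((u))$ of the form $x(u) = u^{-2} + O(u)$ satisfying the differential equation $x(u)^2 x'(u)^2 = 4 x(u)^5 - 4$. -/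
/-!
With `x = P/u²`, write `P = 1 + a` with `X ∣ a`. Expanding, the equation becomes
`a + X a' = X¹⁰ + N(1 + a) / 4`, where every term of the nonlinear part `N` is a product of two
series divisible by `X`. The operator `a ↦ a + X a'` multiplies the `n`-th coefficient by `n + 1`,
so the equation says that `a` is a fixed point of `Φ(a) = (1 + X d/dX)⁻¹ (X¹⁰ + N(1 + a) / 4)`.
Because `N` is quadratic, `Φ` is a contraction for the `X`-adic metric on the ideal `(X)`: the
`n`-th coefficient of `Φ(a)` depends only on the coefficients of `a` below `n`. Picard iteration
from `0` therefore converges to a unique fixed point, and as `X¹⁰ ∣ Φ(0)` it is `O(X¹⁰)`.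
-/

open PowerSeries

theorem pow_succ_dvd_mul_sub_mul {R : Type*} [CommRing R] {x f g f' g' : R} {n : ℕ}
    (hf : x ∣ f) (hg' : x ∣ g') (hff' : x ^ n ∣ f - f') (hgg' : x ^ n ∣ g - g') :
    x ^ (n + 1) ∣ f * g - f' * g' := by
  have h : f * g - f' * g' = f * (g - g') + (f - f') * g' := by ring
  rw [h]
  exact dvd_add (pow_succ' x n ▸ mul_dvd_mul hf hgg') (pow_succ x n ▸ mul_dvd_mul hff' hg')

namespace PowerSeries

section CommRing

variable {R : Type*} [CommRing R]

theorem eq_zero_of_forall_X_pow_dvd {f : R⟦X⟧} (h : ∀ n, (X : R⟦X⟧) ^ n ∣ f) : f = 0 :=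
  ext fun n => X_pow_dvd_iff.1 (h (n + 1)) n (Nat.lt_succ_self n)

theorem eq_of_forall_X_pow_dvd_sub {f g : R⟦X⟧} (h : ∀ n, (X : R⟦X⟧) ^ n ∣ f - g) : f = g :=
  sub_eq_zero.1 (eq_zero_of_forall_X_pow_dvd h)

theorem X_pow_dvd_X_mul_derivative {n : ℕ} {f : R⟦X⟧} (h : (X : R⟦X⟧) ^ n ∣ f) :
    (X : R⟦X⟧) ^ n ∣ X * d⁄dX R f := by
  rw [X_pow_dvd_iff] at h ⊢
  rintro (_ | m) hm
  · exact coeff_zero_X_mul _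
  · rw [coeff_succ_X_mul, coeff_derivative, h (m + 1) hm, zero_mul]

variable (F : R⟦X⟧ → R⟦X⟧)

def IsXAdicContraction : Prop :=
  ∀ n f g, X ∣ f → X ∣ g → (X : R⟦X⟧) ^ n ∣ f - g → (X : R⟦X⟧) ^ (n + 1) ∣ F f - F g

variable {F}

theorem IsXAdicContraction.X_dvd (hF : IsXAdicContraction F) (hF0 : X ∣ F 0) {f : R⟦X⟧}
    (hf : X ∣ f) : X ∣ F f := by
  have h := hF 0 f 0 hf (dvd_zero X) (by simp)
  rw [zero_add, pow_one] at h
  simpa using dvd_add h hF0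

theorem IsXAdicContraction.X_dvd_iterate (hF : IsXAdicContraction F) (hF0 : X ∣ F 0) (k : ℕ) :
    X ∣ F^[k] 0 := by
  induction k with
  | zero => exact dvd_zero X
  | succ k ih => exact Function.iterate_succ_apply' F k 0 ▸ hF.X_dvd hF0 ih

theorem IsXAdicContraction.X_pow_dvd_iterate_sub (hF : IsXAdicContraction F) (hF0 : X ∣ F 0)
    (k j : ℕ) : (X : R⟦X⟧) ^ k ∣ F^[k + j] 0 - F^[k] 0 := by
  induction k with
  | zero => simp
  | succ k ih =>
    rw [Nat.add_right_comm, Function.iterate_succ_apply', Function.iterate_succ_apply']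
    exact hF k _ _ (hF.X_dvd_iterate hF0 _) (hF.X_dvd_iterate hF0 _) ih

theorem IsXAdicContraction.exists_fixedPoint (hF : IsXAdicContraction F) (hF0 : X ∣ F 0) :
    ∃ f, X ∣ f ∧ F f = f := by
  set f : R⟦X⟧ := mk fun n => coeff n (F^[n + 1] 0)
  have hf : ∀ n, (X : R⟦X⟧) ^ n ∣ f - F^[n] 0 := fun n => X_pow_dvd_iff.2 fun m hm => by
    obtain ⟨j, rfl⟩ := Nat.exists_eq_add_of_lt hm
    have := X_pow_dvd_iff.1 (hF.X_pow_dvd_iterate_sub hF0 (m + 1) j) m (Nat.lt_succ_self m)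
    rw [map_sub, sub_eq_zero] at this
    rw [map_sub, coeff_mk, Nat.add_right_comm, this, sub_self]
  have hfX : X ∣ f := by
    have h := hf 1
    rw [pow_one] at h
    simpa using dvd_add h (hF.X_dvd_iterate hF0 1)
  refine ⟨f, hfX, eq_of_forall_X_pow_dvd_sub fun n => dvd_trans (pow_dvd_pow X n.le_succ) ?_⟩
  have hstep := hF n f _ hfX (hF.X_dvd_iterate hF0 n) (hf n)
  rw [← Function.iterate_succ_apply' F n 0] at hstep
  simpa using dvd_sub hstep (hf (n + 1))

theorem IsXAdicContraction.fixedPoint_unique (hF : IsXAdicContraction F) {f g : R⟦X⟧}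
    (hf : X ∣ f) (hg : X ∣ g) (hFf : F f = f) (hFg : F g = g) : f = g := by
  refine eq_of_forall_X_pow_dvd_sub fun n => ?_
  induction n with
  | zero => simp
  | succ n ih => simpa [hFf, hFg] using hF n f g hf hg ih

theorem IsXAdicContraction.X_pow_dvd_of_fixedPoint (hF : IsXAdicContraction F) {f : R⟦X⟧}
    {m : ℕ} (hm : (X : R⟦X⟧) ^ m ∣ F 0) (hf : X ∣ f) (hFf : F f = f) : (X : R⟦X⟧) ^ m ∣ f := by
  suffices ∀ k ≤ m, (X : R⟦X⟧) ^ k ∣ f from this m le_rfl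
  intro k hk
  induction k with
  | zero => simp
  | succ k ih =>
    have h := hF k f 0 hf (dvd_zero X) (by simpa using ih (by omega))
    rw [hFf] at h
    simpa using dvd_add h (dvd_trans (pow_dvd_pow X hk) hm)

end CommRing

section Field

variable (K : Type*) [Field K]

noncomputable def divSuccCoeff : K⟦X⟧ →ₗ[K] K⟦X⟧ where
  toFun g := mk fun n => coeff n g / (n + 1)
  map_add' g h := by ext; simp [add_div]
  map_smul' c g := by ext; simp [mul_div_assoc]

variable {K}

theorem X_pow_dvd_divSuccCoeff {n : ℕ} {g : K⟦X⟧} (h : (X : K⟦X⟧) ^ n ∣ g) :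
    (X : K⟦X⟧) ^ n ∣ divSuccCoeff K g := by
  rw [X_pow_dvd_iff] at h ⊢
  intro m hm
  simp [divSuccCoeff, h m hm]

theorem coeff_add_X_mul_derivative (f : K⟦X⟧) (n : ℕ) :
    coeff n (f + X * d⁄dX K f) = (n + 1) * coeff n f := by
  rcases n with _ | n
  · simp
  · rw [map_add, coeff_succ_X_mul, coeff_derivative]
    push_cast
    ring

theorem add_X_mul_derivative_eq_iff [CharZero K] {f g : K⟦X⟧} :
    f + X * d⁄dX K f = g ↔ f = divSuccCoeff K g := by
  simp only [PowerSeries.ext_iff, coeff_add_X_mul_derivative, divSuccCoeff, LinearMap.coe_mk,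
    AddHom.coe_mk, coeff_mk]
  refine forall_congr' fun n => ?_
  rw [eq_div_iff (by exact_mod_cast n.succ_ne_zero), mul_comm]

end Field

end PowerSeries

namespace HyperellipticEquation

variable {R : Type*} [CommRing R]

noncomputable def nonlinearPart (P : R⟦X⟧) : R⟦X⟧ :=
  (P * (X * d⁄dX R P)) ^ 2 - 4 * (P ^ 3 - 1) * (X * d⁄dX R P) - 4 * (P ^ 4 - 1) * (P - 1)

theorem sub_nonlinearPart (P : R⟦X⟧) :
    P ^ 2 * (X * d⁄dX R P - 2 * P) ^ 2 - (4 * P ^ 5 - 4 * X ^ 10) =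
      nonlinearPart P + 4 * X ^ 10 - 4 * (P - 1 + X * d⁄dX R P) := by
  rw [nonlinearPart]
  ring

theorem X_pow_succ_dvd_nonlinearPart_sub {n : ℕ} {P Q : R⟦X⟧} (hP : X ∣ P - 1) (hQ : X ∣ Q - 1)
    (hPQ : (X : R⟦X⟧) ^ n ∣ P - Q) :
    (X : R⟦X⟧) ^ (n + 1) ∣ nonlinearPart P - nonlinearPart Q := by
  set B := X * d⁄dX R P
  set C := X * d⁄dX R Q
  have hBC : (X : R⟦X⟧) ^ n ∣ B - C := by
    simpa only [B, C, map_sub, mul_sub] using X_pow_dvd_X_mul_derivative hPQ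
  have hPow (k : ℕ) : (X : R⟦X⟧) ^ n ∣ P ^ k - Q ^ k := hPQ.trans (sub_dvd_pow_sub_pow P Q k)
  have hPowOne (k : ℕ) : X ∣ P ^ k - 1 := hP.trans (sub_one_dvd_pow_sub_one P k)
  have hPB : X ∣ P * B := dvd_mul_of_dvd_right (dvd_mul_right X _) P
  have hQC : X ∣ Q * C := dvd_mul_of_dvd_right (dvd_mul_right X _) Q
  have hPBQC : (X : R⟦X⟧) ^ n ∣ P * B - Q * C := by
    rw [show P * B - Q * C = P * (B - C) + (P - Q) * C by ring]
    exact dvd_add (dvd_mul_of_dvd_right hBC P) (dvd_mul_of_dvd_left hPQ C)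
  have hsq := pow_succ_dvd_mul_sub_mul hPB hQC hPBQC hPBQC
  have hcube := pow_succ_dvd_mul_sub_mul (hPowOne 3) (dvd_mul_right X _)
    (by rw [sub_sub_sub_cancel_right]; exact hPow 3) hBC
  have hquart := pow_succ_dvd_mul_sub_mul (hPowOne 4) hQ
    (by rw [sub_sub_sub_cancel_right]; exact hPow 4) (by rw [sub_sub_sub_cancel_right]; exact hPQ)
  have h : nonlinearPart P - nonlinearPart Q =
      ((P * B) * (P * B) - (Q * C) * (Q * C)) - 4 * ((P ^ 3 - 1) * B - (Q ^ 3 - 1) * C)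
        - 4 * ((P ^ 4 - 1) * (P - 1) - (Q ^ 4 - 1) * (Q - 1)) := by
    simp only [nonlinearPart, B, C]
    ring
  rw [h]
  exact dvd_sub (dvd_sub hsq (dvd_mul_of_dvd_right hcube 4)) (dvd_mul_of_dvd_right hquart 4)

variable {K : Type*} [Field K]

noncomputable def picardMap (a : K⟦X⟧) : K⟦X⟧ :=
  divSuccCoeff K (X ^ 10 + (4 : K)⁻¹ • nonlinearPart (1 + a))

theorem isXAdicContraction_picardMap : IsXAdicContraction (picardMap (K := K)) := by
  intro n a b ha hb hab
  rw [picardMap, picardMap, ← map_sub, add_sub_add_left_eq_sub, ← smul_sub]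
  refine X_pow_dvd_divSuccCoeff (dvd_smul_of_dvd _ ?_)
  exact X_pow_succ_dvd_nonlinearPart_sub (by simpa using ha) (by simpa using hb)
    (by simpa using hab)

theorem X_pow_dvd_picardMap_zero : (X : K⟦X⟧) ^ 10 ∣ picardMap 0 := by
  refine X_pow_dvd_divSuccCoeff ?_
  simp [nonlinearPart]

theorem equation_iff_picardMap_eq [CharZero K] (a : K⟦X⟧) :
    (1 + a) ^ 2 * (X * d⁄dX K (1 + a) - 2 * (1 + a)) ^ 2 = 4 * (1 + a) ^ 5 - 4 * X ^ 10 ↔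
      picardMap a = a := by
  have h4 : (4 : K) ≠ 0 := by norm_num
  have h : (1 + a) ^ 2 * (X * d⁄dX K (1 + a) - 2 * (1 + a)) ^ 2 - (4 * (1 + a) ^ 5 - 4 * X ^ 10)
      = (4 : K) • (X ^ 10 + (4 : K)⁻¹ • nonlinearPart (1 + a) - (a + X * d⁄dX K a)) := by
    rw [sub_nonlinearPart, smul_sub, smul_add, smul_smul, mul_inv_cancel₀ h4, one_smul]
    simp only [smul_eq_C_mul, map_ofNat, map_add, Derivation.map_one_eq_zero]
    ring
  rw [← sub_eq_zero, h, smul_eq_zero_iff_right h4, sub_eq_zero, eq_comm,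
    add_X_mul_derivative_eq_iff, eq_comm, picardMap]

end HyperellipticEquation

open HyperellipticEquation

/-- Writing `x(u) = P(u)/u²` with `P ∈ ℚ⟦u⟧`,
the conditions become `P(0) = 1`, the coefficients of `u` and `u²` in `P`
vanish (no `u⁻¹` or `u⁰` term in `x`), and
`P² (u P' - 2P)² = 4P⁵ - 4u¹⁰`. -/
theorem exists_unique_solution :
    ∃! P : ℚ⟦X⟧,
      constantCoeff P = 1 ∧ coeff 1 P = 0 ∧ coeff 2 P = 0 ∧
      P ^ 2 * (X * d⁄dX ℚ P - 2 * P) ^ 2 = 4 * P ^ 5 - 4 * X ^ 10 := by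
  obtain ⟨a, ha, hfix⟩ := isXAdicContraction_picardMap.exists_fixedPoint
    (dvd_trans (dvd_pow_self (X : ℚ⟦X⟧) (by norm_num)) X_pow_dvd_picardMap_zero)
  have hsmall := X_pow_dvd_iff.1 (isXAdicContraction_picardMap.X_pow_dvd_of_fixedPoint
    X_pow_dvd_picardMap_zero ha hfix)
  refine ⟨1 + a, ⟨?_, ?_, ?_, (equation_iff_picardMap_eq a).2 hfix⟩, ?_⟩
  · simpa using X_dvd_iff.1 ha
  · simp [hsmall 1 (by norm_num)]
  · simp [hsmall 2 (by norm_num)]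
  rintro P ⟨h0, -, -, heq⟩
  rw [← add_sub_cancel 1 P] at heq ⊢
  rw [isXAdicContraction_picardMap.fixedPoint_unique (X_dvd_iff.2 (by simp [h0])) ha
    ((equation_iff_picardMap_eq _).1 heq) hfix]
end

section
/- Let $x(u) \in \mathbb{Q}((u))$ be the unique Laurent series solution of $x(u)^2 x'(u)^2 = 4x(u)^5 - 4$ with $x(u) = u^{-2} + O(u)$. Then the coefficient of $u^{k-2}$ in $x(u)$ vanishes unless $10 \mid k$; i.e., one can write $x(u) = u^{-2} + \sum_{n\ge 1} \frac{C_{10n}}{10n}\frac{u^{10n-2}}{(10n)!}$ for rationals $C_{10n}$. -/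
open PowerSeries

/-!
The equation `P² (θP - 2P)² = 4P⁵ + F`, with `θ = X·d/dX`, has at most one solution with
constant term `1`: if `P ≠ Q` are two solutions and `P - Q = Xⁿ D` with `D(0) = c ≠ 0`, then
`A = P(θP - 2P)` and `B = Q(θQ - 2Q)` satisfy `(A - B)(A + B) = 4(P⁵ - Q⁵)`; dividing by `Xⁿ`
and comparing constant terms gives `-4(n - 4)c = 20c`, i.e. `(n + 1)c = 0`.
Since `θ` commutes with `X ↦ ζX`, for `ζ¹⁰ = 1` the series `P(ζX)` solves the same equation with
`F = -4X¹⁰`, so `P(ζX) = P(X)`; over `ℂ`, with `ζ` a primitive tenth root of unity, this kills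
every coefficient of `P` in degrees not divisible by `10`.
-/

namespace PowerSeries

variable {R : Type*} [CommSemiring R]

theorem coeff_X_mul_derivative (f : R⟦X⟧) (n : ℕ) :
    coeff n (X * d⁄dX R f) = n * coeff n f := by
  cases n with
  | zero => simp
  | succ m => rw [coeff_succ_X_mul, coeff_derivative]; push_cast; ring

theorem X_mul_derivative_X_pow_mul (f : R⟦X⟧) (n : ℕ) :
    X * d⁄dX R (X ^ n * f) = X ^ n * (X * d⁄dX R f + (n : R⟦X⟧) * f) := by
  ext k
  rw [coeff_X_mul_derivative, coeff_X_pow_mul', coeff_X_pow_mul']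
  split_ifs with h
  · obtain ⟨j, rfl⟩ := Nat.exists_eq_add_of_le h
    rw [map_add, coeff_X_mul_derivative, ← map_natCast (C (R := R)), coeff_C_mul,
      Nat.add_sub_cancel_left]
    push_cast
    ring
  · rw [mul_zero]

theorem rescale_X_mul_derivative (a : R) (f : R⟦X⟧) :
    rescale a (X * d⁄dX R f) = X * d⁄dX R (rescale a f) := by
  ext n
  simp only [coeff_rescale, coeff_X_mul_derivative]
  ring

theorem rescale_X_pow_of_pow_eq_one {a : R} {m : ℕ} (ha : a ^ m = 1) :
    rescale a (X ^ m : R⟦X⟧) = X ^ m := by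
  ext n
  rw [coeff_rescale, coeff_X_pow]
  split_ifs with h
  · rw [h, ha, one_mul]
  · rw [mul_zero]

theorem map_derivative {S : Type*} [CommSemiring S] (φ : R →+* S) (f : R⟦X⟧) :
    map φ (d⁄dX R f) = d⁄dX S (map φ f) := by
  ext n
  simp [coeff_derivative]

section Uniqueness

variable {K : Type*} [CommRing K] [IsDomain K] [CharZero K]

theorem eq_of_sq_mul_sq_X_mul_derivative_sub {F P Q : K⟦X⟧}
    (hP0 : constantCoeff P = 1) (hQ0 : constantCoeff Q = 1)
    (hP : P ^ 2 * (X * d⁄dX K P - 2 * P) ^ 2 = 4 * P ^ 5 + F)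
    (hQ : Q ^ 2 * (X * d⁄dX K Q - 2 * Q) ^ 2 = 4 * Q ^ 5 + F) :
    P = Q := by
  by_contra hne
  set n := (P - Q).order.toNat
  set D := (P - Q).divXPowOrder
  have hD : X ^ n * D = P - Q := X_pow_order_mul_divXPowOrder
  have hD0 : constantCoeff D ≠ 0 :=
    constantCoeff_divXPowOrder_eq_zero_iff.not.mpr (sub_ne_zero.mpr hne)
  set RP := X * d⁄dX K P - 2 * P
  set RQ := X * d⁄dX K Q - 2 * Q
  have hR : RP - RQ = X ^ n * (X * d⁄dX K D + ((n : K⟦X⟧) - 2) * D) := by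
    have := X_mul_derivative_X_pow_mul D n
    rw [hD, map_sub, mul_sub] at this
    linear_combination this + 2 * hD
  have hdiff : P * RP - Q * RQ =
      X ^ n * (P * (X * d⁄dX K D + ((n : K⟦X⟧) - 2) * D) + RQ * D) := by
    linear_combination P * hR - RQ * hD
  have hsq : (P * RP - Q * RQ) * (P * RP + Q * RQ) =
      X ^ n * (4 * D * (P ^ 4 + P ^ 3 * Q + P ^ 2 * Q ^ 2 + P * Q ^ 3 + Q ^ 4)) := by
    linear_combination
      hP - hQ - (4 * (P ^ 4 + P ^ 3 * Q + P ^ 2 * Q ^ 2 + P * Q ^ 3 + Q ^ 4)) * hD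
  rw [hdiff, mul_assoc] at hsq
  have h := congrArg constantCoeff (X_pow_mul_injective hsq)
  simp only [map_mul, map_add, map_sub, map_pow, map_natCast, map_ofNat, constantCoeff_X,
    zero_mul, RP, RQ, hP0, hQ0] at h
  have : ((4 * (n + 1) : ℕ) : K) * constantCoeff D = 0 := by push_cast; linear_combination -h
  exact hD0 ((mul_eq_zero.mp this).resolve_left (Nat.cast_ne_zero.mpr (by positivity)))

theorem rescale_eq_self_of_sq_mul_sq_X_mul_derivative_sub {a : K} {F P : K⟦X⟧}
    (hF : rescale a F = F) (hP0 : constantCoeff P = 1)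
    (hP : P ^ 2 * (X * d⁄dX K P - 2 * P) ^ 2 = 4 * P ^ 5 + F) :
    rescale a P = P := by
  have h0 : constantCoeff (rescale a P) = 1 := by
    rw [← coeff_zero_eq_constantCoeff_apply, coeff_rescale, pow_zero, one_mul,
      coeff_zero_eq_constantCoeff_apply, hP0]
  have h := congrArg (rescale a) hP
  rw [map_mul, map_add, map_mul, map_pow, map_pow, map_pow, map_sub, rescale_X_mul_derivative,
    map_mul, map_ofNat, map_ofNat, hF] at h
  exact eq_of_sq_mul_sq_X_mul_derivative_sub h0 hP0 h hP

theorem coeff_eq_zero_of_not_dvd {ζ : K} {m k : ℕ} (hζ : IsPrimitiveRoot ζ m) {F P : K⟦X⟧}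
    (hF : rescale ζ F = F) (hP0 : constantCoeff P = 1)
    (hP : P ^ 2 * (X * d⁄dX K P - 2 * P) ^ 2 = 4 * P ^ 5 + F) (hk : ¬m ∣ k) :
    coeff k P = 0 := by
  have h := congrArg (coeff k) (rescale_eq_self_of_sq_mul_sq_X_mul_derivative_sub hF hP0 hP)
  rw [coeff_rescale] at h
  by_contra hc
  exact hk ((hζ.pow_eq_one_iff_dvd k).mp (mul_right_cancel₀ hc (h.trans (one_mul _).symm)))

end Uniqueness

end PowerSeries

theorem coeff_vanish_unless_ten_dvd_general (P : ℚ⟦X⟧)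
    (h0 : constantCoeff P = 1)
    (hode : P ^ 2 * (X * d⁄dX ℚ P - 2 * P) ^ 2 = 4 * P ^ 5 - 4 * X ^ 10) :
    (∀ k : ℕ, 0 < k → ¬ (10 ∣ k) → coeff k P = 0) ∧
    ∃ C : ℕ → ℚ, ∀ n : ℕ, 0 < n →
      coeff (10 * n) P = C n / (10 * n) * (1 / (10 * n).factorial) := by
  refine ⟨fun k _ hk => ?_, fun n => coeff (10 * n) P * (10 * n) * (10 * n).factorial,
    fun n hn => by field_simp⟩
  obtain ⟨ζ, hζ⟩ : ∃ ζ : ℂ, IsPrimitiveRoot ζ 10 :=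
    ⟨_, Complex.isPrimitiveRoot_exp 10 (by norm_num)⟩
  have hF : rescale ζ (-4 * X ^ 10 : ℂ⟦X⟧) = -4 * X ^ 10 := by
    rw [map_mul, rescale_X_pow_of_pow_eq_one hζ.pow_eq_one, map_neg, map_ofNat]
  set φ := PowerSeries.map (algebraMap ℚ ℂ)
  have hode' := congrArg φ hode
  simp only [φ, map_mul, map_sub, map_pow, map_ofNat, map_X, map_derivative] at hode'
  rw [sub_eq_add_neg (4 * _), ← neg_mul] at hode'
  have h0' : constantCoeff (φ P) = 1 := by
    rw [← coeff_zero_eq_constantCoeff_apply, coeff_map, coeff_zero_eq_constantCoeff_apply, h0,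
      map_one]
  simpa [φ] using coeff_eq_zero_of_not_dvd hζ hF h0' hode' hk

/-- For the unique Laurent series solution `x(u) = u⁻² + O(u)` of
`x² x'² = 4x⁵ - 4` (written as `x = P/u²` with `P ∈ ℚ⟦u⟧`), the coefficient
of `u^(k-2)` in `x` (i.e. of `u^k` in `P`) vanishes unless `10 ∣ k`; thus
`x(u) = u⁻² + ∑_{n≥1} (C_{10n}/(10n)) u^(10n-2)/(10n)!` for rationals `C_{10n}`. -/
theorem coeff_vanish_unless_ten_dvd (P : ℚ⟦X⟧)
    (h0 : constantCoeff P = 1) (h1 : coeff 1 P = 0) (h2 : coeff 2 P = 0)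
    (hode : P ^ 2 * (X * d⁄dX ℚ P - 2 * P) ^ 2 = 4 * P ^ 5 - 4 * X ^ 10) :
    (∀ k : ℕ, 0 < k → ¬ (10 ∣ k) → coeff k P = 0) ∧
    ∃ C : ℕ → ℚ, ∀ n : ℕ, 0 < n →
      coeff (10 * n) P = C n / (10 * n) * (1 / (10 * n).factorial) :=
  coeff_vanish_unless_ten_dvd_general P h0 hode
end

section
/- Define $y(u) \in \mathbb{Q}((u))$ by $y(u)^2 = x(u)^5 - 1$ and leading term $-u^{-5}$, where $x(u) = u^{-2} + O(u)$ solves $x^2 (x')^2 = 4x^5 - 4$. Then $x'(u) = 2y(u)/x(u)$ and the coefficient of $u^{k-5}$ in $y(u)$ vanishes unless $10 \mid k$. -/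
/-!
The equation for `P = u² x` determines `P` from `P(0) = 1` coefficient by coefficient: the
coefficient of `uⁿ` enters it linearly with the factor `-4 (n + 1) ≠ 0`. Since `u ↦ ζ u` with
`ζ¹⁰ = 1` preserves the equation, `P(ζu) = P(u)` for a primitive tenth root of unity `ζ`, so `P`
is a series in `u¹⁰`. A square root of a power series is determined by its nonzero constant
term; this gives `Y(ζu) = Y(u)` from `Y² = P⁵ - u¹⁰`, and `x' = 2y/x` from
`((u P' - 2P) P)² = (2Y)²`.
-/

open PowerSeries

section CommSemiring

variable {R : Type*} [CommSemiring R]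

theorem PowerSeries.coeff_X_mul_derivative_s7 (f : R⟦X⟧) (n : ℕ) :
    coeff n (X * d⁄dX R f) = n * coeff n f := by
  cases n with
  | zero => simp
  | succ n =>
    rw [coeff_succ_X_mul, coeff_derivative]
    push_cast
    ring

theorem PowerSeries.rescale_X_mul_derivative_s7 (c : R) (f : R⟦X⟧) :
    rescale c (X * d⁄dX R f) = X * d⁄dX R (rescale c f) := by
  ext n
  simp only [coeff_rescale, coeff_X_mul_derivative_s7]
  ring

theorem PowerSeries.map_derivative_s7 {S : Type*} [CommSemiring S] (φ : R →+* S) (f : R⟦X⟧) :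
    map φ (d⁄dX R f) = d⁄dX S (map φ f) := by
  ext n
  simp [coeff_derivative]

theorem PowerSeries.rescale_X_pow_of_pow_eq_one_s7 {c : R} {n : ℕ} (hc : c ^ n = 1) :
    rescale c (X ^ n : R⟦X⟧) = X ^ n := by
  ext m
  rw [coeff_rescale, coeff_X_pow]
  split_ifs with h
  · rw [h, hc, one_mul]
  · rw [mul_zero]

theorem PowerSeries.constantCoeff_rescale (c : R) (f : R⟦X⟧) :
    constantCoeff (rescale c f) = constantCoeff f := by
  rw [← coeff_zero_eq_constantCoeff_apply, coeff_rescale, pow_zero, one_mul,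
    coeff_zero_eq_constantCoeff_apply]

theorem PowerSeries.constantCoeff_map {S : Type*} [CommSemiring S] (φ : R →+* S) (f : R⟦X⟧) :
    constantCoeff (map φ f) = φ (constantCoeff f) := by
  rw [← coeff_zero_eq_constantCoeff_apply, coeff_map, coeff_zero_eq_constantCoeff_apply]

theorem PowerSeries.coeff_mul_eq_coeff_mul_constantCoeff {f g : R⟦X⟧} {n : ℕ}
    (hf : ∀ m < n, coeff m f = 0) : coeff n (f * g) = coeff n f * constantCoeff g := by
  obtain ⟨f, rfl⟩ := X_pow_dvd_iff.mpr hf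
  rw [mul_assoc, coeff_X_pow_mul', coeff_X_pow_mul', if_pos le_rfl, if_pos le_rfl,
    Nat.sub_self, coeff_zero_eq_constantCoeff_apply, coeff_zero_eq_constantCoeff_apply, map_mul]

end CommSemiring

section CommRing

variable {R : Type*} [CommRing R] [NoZeroDivisors R]

theorem PowerSeries.coeff_eq_zero_of_rescale_eq_self {ζ : R} {k : ℕ} (hζ : IsPrimitiveRoot ζ k)
    {f : R⟦X⟧} (hf : rescale ζ f = f) {m : ℕ} (hm : ¬ k ∣ m) : coeff m f = 0 := by
  have hζm : ζ ^ m - 1 ≠ 0 := sub_ne_zero.mpr fun h => hm ((hζ.pow_eq_one_iff_dvd m).mp h)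
  have h : (ζ ^ m - 1) * coeff m f = 0 := by
    have := congrArg (coeff m) hf
    rw [coeff_rescale] at this
    linear_combination this
  exact (mul_eq_zero.mp h).resolve_left hζm

theorem PowerSeries.eq_of_sq_eq_sq_of_constantCoeff_eq [CharZero R] {a b : R⟦X⟧}
    (h : a ^ 2 = b ^ 2) (h0 : constantCoeff a = constantCoeff b) (hb : constantCoeff b ≠ 0) :
    a = b := by
  refine (sq_eq_sq_iff_eq_or_eq_neg.mp h).resolve_right fun hab => hb ?_
  rwa [hab, map_neg, CharZero.neg_eq_self_iff] at h0

end CommRing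

section InversionODE

variable {R : Type*} [CommRing R]

/-- The equation `x² x'² = 4x⁵ - 4` for `x = P / u²`, multiplied through by `u¹⁰`. -/
def SolvesInversionODE (P : R⟦X⟧) : Prop :=
  P ^ 2 * (X * d⁄dX R P - 2 * P) ^ 2 = 4 * P ^ 5 - 4 * X ^ 10

theorem SolvesInversionODE.map {S : Type*} [CommRing S] (φ : R →+* S) {P : R⟦X⟧}
    (hP : SolvesInversionODE P) : SolvesInversionODE (map φ P) := by
  have := congrArg (PowerSeries.map φ) hP
  simpa only [SolvesInversionODE, map_mul, map_pow, map_sub, map_ofNat, map_X,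
    map_derivative_s7] using this

theorem SolvesInversionODE.rescale {P : R⟦X⟧} (hP : SolvesInversionODE P) {c : R}
    (hc : c ^ 10 = 1) : SolvesInversionODE (PowerSeries.rescale c P) := by
  have := congrArg (PowerSeries.rescale c) hP
  simp only [map_mul, map_pow, map_sub, map_ofNat] at this
  rwa [← map_mul _ X, rescale_X_mul_derivative_s7, ← map_pow _ X,
    rescale_X_pow_of_pow_eq_one_s7 hc] at this

theorem SolvesInversionODE.eq_of_constantCoeff_eq_one [NoZeroDivisors R] [CharZero R]
    {P Q : R⟦X⟧} (hP : SolvesInversionODE P) (hQ : SolvesInversionODE Q)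
    (hP0 : constantCoeff P = 1) (hQ0 : constantCoeff Q = 1) : P = Q := by
  unfold SolvesInversionODE at hP hQ
  ext n
  refine Nat.strong_induction_on n fun n ih => ?_
  set A := X * d⁄dX R P - 2 * P
  set B := X * d⁄dX R Q - 2 * Q
  have hdiff : (P - Q) * ((P + Q) * A ^ 2) + (A - B) * ((A + B) * Q ^ 2)
      = (P - Q) * (4 * (P ^ 4 + P ^ 3 * Q + P ^ 2 * Q ^ 2 + P * Q ^ 3 + Q ^ 4)) := by
    linear_combination hP - hQ
  have hAB : ∀ m, coeff m (A - B) = (m - 2) * coeff m (P - Q) := by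
    intro m
    simp only [A, B, map_sub, two_mul, map_add, coeff_X_mul_derivative_s7]
    ring
  have hPQ_low : ∀ m < n, coeff m (P - Q) = 0 := fun m hm => by rw [map_sub, ih m hm, sub_self]
  have hAB_low : ∀ m < n, coeff m (A - B) = 0 := fun m hm => by rw [hAB, hPQ_low m hm, mul_zero]
  have hA0 : constantCoeff A = -2 := by simp [A, hP0, map_ofNat]
  have hB0 : constantCoeff B = -2 := by simp [B, hQ0, map_ofNat]
  have hn := congrArg (coeff n) hdiff
  rw [map_add, coeff_mul_eq_coeff_mul_constantCoeff hPQ_low,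
    coeff_mul_eq_coeff_mul_constantCoeff hAB_low, coeff_mul_eq_coeff_mul_constantCoeff hPQ_low,
    hAB] at hn
  simp only [map_mul, map_add, map_pow, map_ofNat, hA0, hB0, hP0, hQ0] at hn
  have hlin : (4 * (n + 1) : R) * coeff n (P - Q) = 0 := by linear_combination -hn
  have hn4 : (4 * (n + 1) : R) ≠ 0 := by exact_mod_cast (by omega : 4 * (n + 1) ≠ 0)
  rw [← sub_eq_zero, ← map_sub]
  exact (mul_eq_zero.mp hlin).resolve_left hn4

theorem SolvesInversionODE.rescale_eq_self [NoZeroDivisors R] [CharZero R] {P : R⟦X⟧}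
    (hP : SolvesInversionODE P) (hP0 : constantCoeff P = 1) {c : R} (hc : c ^ 10 = 1) :
    PowerSeries.rescale c P = P :=
  (hP.rescale hc).eq_of_constantCoeff_eq_one hP (by rw [constantCoeff_rescale, hP0]) hP0

end InversionODE

/-- Here `X` stands for `u`, `x = P / u²` and `y = Y / u⁵`; `x' = 2y/x` becomes
`(u P' - 2P) P = 2 Y`. -/
theorem y_series_properties_general (P Y : ℚ⟦X⟧)
    (h0 : constantCoeff P = 1)
    (hode : P ^ 2 * (X * d⁄dX ℚ P - 2 * P) ^ 2 = 4 * P ^ 5 - 4 * X ^ 10)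
    (hY0 : constantCoeff Y = -1)
    (hY : Y ^ 2 = P ^ 5 - X ^ 10) :
    (X * d⁄dX ℚ P - 2 * P) * P = 2 * Y ∧
    ∀ k : ℕ, 0 < k → ¬ (10 ∣ k) → coeff k Y = 0 := by
  have hxy : (X * d⁄dX ℚ P - 2 * P) * P = 2 * Y :=
    eq_of_sq_eq_sq_of_constantCoeff_eq (by linear_combination hode - 4 * hY)
      (by simp [h0, hY0, map_ofNat]) (by simp [hY0, map_ofNat])
  refine ⟨hxy, fun k _ hk => ?_⟩
  obtain ⟨ζ, hζ⟩ : ∃ ζ : ℂ, IsPrimitiveRoot ζ 10 :=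
    ⟨_, Complex.isPrimitiveRoot_exp 10 (by norm_num)⟩
  set ι := PowerSeries.map (algebraMap ℚ ℂ)
  have hPζ : rescale ζ (ι P) = ι P :=
    (SolvesInversionODE.map _ hode).rescale_eq_self (by rw [constantCoeff_map, h0, map_one])
      hζ.pow_eq_one
  have hYζ : rescale ζ (ι Y) = ι Y := by
    refine eq_of_sq_eq_sq_of_constantCoeff_eq ?_ (by rw [constantCoeff_rescale])
      (by simp [ι, constantCoeff_map, hY0])
    rw [← map_pow, ← map_pow, hY, map_sub ι, map_pow ι, map_pow ι X, map_X, map_sub, map_pow,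
      hPζ, rescale_X_pow_of_pow_eq_one_s7 hζ.pow_eq_one]
  simpa [ι] using coeff_eq_zero_of_rescale_eq_self hζ hYζ hk

/-- Let `x = P/u²` solve `x² x'² = 4x⁵ - 4` and let `y = Y/u⁵` with
`y² = x⁵ - 1` (i.e. `Y² = P⁵ - u¹⁰`) and leading term `-u⁻⁵` (i.e. `Y(0) = -1`).
Then `x' = 2y/x` (i.e. `(u P' - 2P) P = 2 Y`) and the coefficient of
`u^(k-5)` in `y` (i.e. of `u^k` in `Y`) vanishes unless `10 ∣ k`. -/
theorem y_series_properties (P Y : ℚ⟦X⟧)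
    (h0 : constantCoeff P = 1) (h1 : coeff 1 P = 0) (h2 : coeff 2 P = 0)
    (hode : P ^ 2 * (X * d⁄dX ℚ P - 2 * P) ^ 2 = 4 * P ^ 5 - 4 * X ^ 10)
    (hY0 : constantCoeff Y = -1)
    (hY : Y ^ 2 = P ^ 5 - X ^ 10) :
    (X * d⁄dX ℚ P - 2 * P) * P = 2 * Y ∧
    ∀ k : ℕ, 0 < k → ¬ (10 ∣ k) → coeff k Y = 0 :=
  y_series_properties_general P Y h0 hode hY0 hY
end
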